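/- arXiv:2509.01287 — 6 statements merged into one kernel-verified Lean document; each statement's English description precedes it below -/
import Mathlib

section
/- Let X be a real Banach space and let X' denote its topological dual (the space of continuous linear functionals on X, with the operator norm). Let F : X → X' be a map, let x̃ ∈ X, and let c_L, c_inv, δ, ε > 0 be real numbers. Assume: (1) ‖F(x̃)‖ ≤ δ; (2) F is Fréchet differentiable at every point of the closed ball of radius ε centered at x̃, with derivative DF; (3) there exists a continuous linear equivalence Φ : X ≃ X' whose underlying continuous linear map equals DF(x̃) and whose inverse satisfies ‖Φ⁻¹‖ ≤ c_inv; (4) for all x₁, x₂ in the closed ball of radius ε centered at x̃ one has ‖DF(x₁) − DF(x₂)‖ ≤ c_L ‖x₁ − x₂‖ in operator norm; (5) c_L · c_inv · ε ≤ 1/2 and 2 · c_inv · δ ≤ ε. Then there exists a unique x in the closed ball of radius ε centered at x̃ such that F(x) = 0. -/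
set_option maxHeartbeats 800000
open scoped NNReal ENNReal

/-- Quantitative inverse function theorem: existence and uniqueness of a zero of `F`
in the closed ball of radius `ε` around `x₀`. -/
theorem stmt_0 {X : Type*} [NormedAddCommGroup X] [NormedSpace ℝ X] [CompleteSpace X]
    (F : X → StrongDual ℝ X) (DF : X → X →L[ℝ] StrongDual ℝ X)
    (x₀ : X) (cL cinv δ ε : ℝ)
    (hcL : 0 < cL) (hcinv : 0 < cinv) (hδ : 0 < δ) (hε : 0 < ε)
    (h1 : ‖F x₀‖ ≤ δ)
    (h2 : ∀ x ∈ Metric.closedBall x₀ ε, HasFDerivAt F (DF x) x)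
    (h3 : ∃ Φ : X ≃L[ℝ] StrongDual ℝ X,
      (Φ : X →L[ℝ] StrongDual ℝ X) = DF x₀ ∧
      ‖(Φ.symm : StrongDual ℝ X →L[ℝ] X)‖ ≤ cinv)
    (h4 : ∀ x₁ ∈ Metric.closedBall x₀ ε, ∀ x₂ ∈ Metric.closedBall x₀ ε,
      ‖DF x₁ - DF x₂‖ ≤ cL * ‖x₁ - x₂‖)
    (h5 : cL * cinv * ε ≤ 1 / 2) (h5' : 2 * cinv * δ ≤ ε) :
    ∃! x, x ∈ Metric.closedBall x₀ ε ∧ F x = 0 := by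
  obtain ⟨Φ, hΦ, hΦinv⟩ := h3
  set S := Metric.closedBall x₀ ε with hS
  have hx₀S : x₀ ∈ S := Metric.mem_closedBall_self hε.le
  set g : X → X := fun x => x - Φ.symm (F x) with hg
  -- mean value estimate
  have hmvt : ∀ x ∈ S, ∀ y ∈ S, ‖F y - F x - DF x₀ (y - x)‖ ≤ (cL * ε) * ‖y - x‖ := by
    intro x hx y hy
    refine Convex.norm_image_sub_le_of_norm_hasFDerivWithin_le'
      (fun z hz => (h2 z hz).hasFDerivWithinAt) (fun z hz => ?_)
      (convex_closedBall x₀ ε) hx hy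
    calc ‖DF z - DF x₀‖ ≤ cL * ‖z - x₀‖ := h4 z hz x₀ hx₀S
      _ ≤ cL * ε := by
          have : ‖z - x₀‖ ≤ ε := by
            rw [← dist_eq_norm]; exact Metric.mem_closedBall.mp hz
          nlinarith
  have hΦsymm : ∀ v : StrongDual ℝ X, ‖Φ.symm v‖ ≤ cinv * ‖v‖ := fun v =>
    (Φ.symm : StrongDual ℝ X →L[ℝ] X).le_of_opNorm_le hΦinv v
  -- contraction estimate
  have hcontr : ∀ x ∈ S, ∀ y ∈ S, ‖g x - g y‖ ≤ (1 / 2) * ‖x - y‖ := by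
    intro x hx y hy
    have e1 : Φ.symm (DF x₀ (x - y)) = x - y := by rw [← hΦ]; simp
    have key : g x - g y = Φ.symm (DF x₀ (x - y) - (F x - F y)) := by
      rw [map_sub, e1, map_sub]
      simp only [hg]
      abel
    rw [key]
    calc ‖Φ.symm (DF x₀ (x - y) - (F x - F y))‖
        ≤ cinv * ‖DF x₀ (x - y) - (F x - F y)‖ := hΦsymm _
      _ = cinv * ‖F x - F y - DF x₀ (x - y)‖ := by rw [← norm_neg]; congr 1; abel
      _ ≤ cinv * ((cL * ε) * ‖x - y‖) := by
          have := hmvt y hy x hx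
          have h0 : (0:ℝ) ≤ cinv := hcinv.le
          nlinarith [norm_nonneg (x - y)]
      _ ≤ (1 / 2) * ‖x - y‖ := by nlinarith [norm_nonneg (x - y)]
  -- g maps S into S
  have hgx₀ : ‖g x₀ - x₀‖ ≤ cinv * δ := by
    have : g x₀ - x₀ = -(Φ.symm (F x₀)) := by simp [hg]
    rw [this, norm_neg]
    calc ‖Φ.symm (F x₀)‖ ≤ cinv * ‖F x₀‖ := hΦsymm _
      _ ≤ cinv * δ := by nlinarith
  have hmaps : ∀ x ∈ S, g x ∈ S := by
    intro x hx
    rw [hS, Metric.mem_closedBall, dist_eq_norm]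
    have hxd : ‖x - x₀‖ ≤ ε := by
      rw [← dist_eq_norm]; exact Metric.mem_closedBall.mp hx
    calc ‖g x - x₀‖ ≤ ‖g x - g x₀‖ + ‖g x₀ - x₀‖ := by
          have := norm_add_le (g x - g x₀) (g x₀ - x₀)
          simpa using this
      _ ≤ (1 / 2) * ‖x - x₀‖ + cinv * δ := by
          have := hcontr x hx x₀ hx₀S
          linarith
      _ ≤ ε := by nlinarith
  -- set up fixed point on the subtype
  haveI : CompleteSpace S := Metric.isClosed_closedBall.completeSpace_coe
  haveI : Nonempty S := ⟨⟨x₀, hx₀S⟩⟩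
  set T : S → S := fun p => ⟨g p, hmaps p p.2⟩ with hT
  have hTc : ContractingWith (1 / 2 : ℝ≥0) T := by
    constructor
    · rw [← NNReal.coe_lt_one]; norm_num
    · intro a b
      rw [edist_dist, edist_dist]
      have hd : dist (T a) (T b) ≤ (1 / 2 : ℝ) * dist a b := by
        rw [Subtype.dist_eq, Subtype.dist_eq, dist_eq_norm, dist_eq_norm]
        exact hcontr a a.2 b b.2
      calc ENNReal.ofReal (dist (T a) (T b))
          ≤ ENNReal.ofReal ((1 / 2 : ℝ) * dist a b) := ENNReal.ofReal_le_ofReal hd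
        _ = (1 / 2 : ℝ≥0) * ENNReal.ofReal (dist a b) := by
            rw [ENNReal.ofReal_mul (by norm_num)]
            norm_num
            congr 1
            rw [one_div, ENNReal.ofReal_inv_of_pos two_pos, ENNReal.ofReal_ofNat]
  have hfix_iff : ∀ x : X, (g x = x ↔ F x = 0) := by
    intro x
    constructor
    · intro h
      have : Φ.symm (F x) = 0 := by
        have : x - Φ.symm (F x) = x := h
        have := sub_eq_self.mp this
        exact this
      have := congrArg Φ this
      simpa using this
    · intro h; simp [hg, h]
  set z := hTc.fixedPoint T with hz
  have hzfix : T z = z := hTc.fixedPoint_isFixedPt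
  have hzF : F (z : X) = 0 := by
    apply (hfix_iff (z : X)).mp
    exact congrArg Subtype.val hzfix
  refine ⟨(z : X), ⟨z.2, hzF⟩, ?_⟩
  rintro y ⟨hyS, hyF⟩
  have : T ⟨y, hyS⟩ = ⟨y, hyS⟩ := by
    ext; exact (hfix_iff y).mpr hyF
  have := hTc.fixedPoint_unique (x := ⟨y, hyS⟩) this
  exact congrArg Subtype.val this
end

section
/- Let X be a real Banach space with topological dual X', let F : X → X', x̃ ∈ X, and c_L, c_inv, δ, ε > 0. Assume: (1) ‖F(x̃)‖ ≤ δ; (2) F is Fréchet differentiable at every point of the closed ball of radius ε centered at x̃, with derivative DF; (3) there exists a continuous linear equivalence Φ : X ≃ X' whose underlying continuous linear map equals DF(x̃) and whose inverse satisfies ‖Φ⁻¹‖ ≤ c_inv; (4) for all x₁, x₂ in the closed ball of radius ε centered at x̃, ‖DF(x₁) − DF(x₂)‖ ≤ c_L ‖x₁ − x₂‖; (5) c_L · c_inv · ε ≤ 1/2 and 2 · c_inv · δ ≤ ε. Define T : X → X by T(ρ) := ρ − Φ⁻¹(F(x̃ + ρ)). Then for all ρ, ρ' in the closed ball of radius ε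 centered at 0, one has ‖T(ρ) − T(ρ')‖ ≤ (1/2)‖ρ − ρ'‖ and ‖T(ρ)‖ ≤ ε; that is, T is a contraction of the closed ball of radius ε centered at 0 into itself. -/
/-- The fixed-point operator `T ρ = ρ - Φ⁻¹ (F (x₀ + ρ))` is a contraction of the
closed `ε`-ball around `0` into itself. -/
theorem stmt_2 {X : Type*} [NormedAddCommGroup X] [NormedSpace ℝ X] [CompleteSpace X]
    (F : X → StrongDual ℝ X) (DF : X → X →L[ℝ] StrongDual ℝ X)
    (x₀ : X) (cL cinv δ ε : ℝ)
    (hcL : 0 < cL) (hcinv : 0 < cinv) (hδ : 0 < δ) (hε : 0 < ε)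
    (h1 : ‖F x₀‖ ≤ δ)
    (h2 : ∀ x ∈ Metric.closedBall x₀ ε, HasFDerivAt F (DF x) x)
    (Φ : X ≃L[ℝ] StrongDual ℝ X)
    (hΦ : (Φ : X →L[ℝ] StrongDual ℝ X) = DF x₀)
    (hΦinv : ‖(Φ.symm : StrongDual ℝ X →L[ℝ] X)‖ ≤ cinv)
    (h4 : ∀ x₁ ∈ Metric.closedBall x₀ ε, ∀ x₂ ∈ Metric.closedBall x₀ ε,
      ‖DF x₁ - DF x₂‖ ≤ cL * ‖x₁ - x₂‖)
    (h5 : cL * cinv * ε ≤ 1 / 2) (h5' : 2 * cinv * δ ≤ ε)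
    (T : X → X) (hT : ∀ ρ, T ρ = ρ - Φ.symm (F (x₀ + ρ))) :
    ∀ ρ ∈ Metric.closedBall (0 : X) ε, ∀ ρ' ∈ Metric.closedBall (0 : X) ε,
      ‖T ρ - T ρ'‖ ≤ (1 / 2) * ‖ρ - ρ'‖ ∧ ‖T ρ‖ ≤ ε := by
  have hx₀ : x₀ ∈ Metric.closedBall x₀ ε := Metric.mem_closedBall_self hε.le
  -- mean value difference estimate
  have key : ∀ y ∈ Metric.closedBall x₀ ε, ∀ z ∈ Metric.closedBall x₀ ε,
      ‖F y - F z - DF x₀ (y - z)‖ ≤ (cL * ε) * ‖y - z‖ := by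
    intro y hy z hz
    refine Convex.norm_image_sub_le_of_norm_hasFDerivWithin_le'
      (fun x hx => (h2 x hx).hasFDerivWithinAt) (fun x hx => ?_)
      (convex_closedBall _ _) hz hy
    calc ‖DF x - DF x₀‖ ≤ cL * ‖x - x₀‖ := h4 x hx x₀ hx₀
      _ ≤ cL * ε := by
          apply mul_le_mul_of_nonneg_left _ hcL.le
          simpa [dist_eq_norm] using hx
  -- contraction estimate for arbitrary points of the ball
  have contr : ∀ ρ ∈ Metric.closedBall (0 : X) ε, ∀ ρ' ∈ Metric.closedBall (0 : X) ε,
      ‖T ρ - T ρ'‖ ≤ (1 / 2) * ‖ρ - ρ'‖ := by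
    intro ρ hρ ρ' hρ'
    have hy : x₀ + ρ ∈ Metric.closedBall x₀ ε := by
      simpa [dist_eq_norm] using (by simpa [dist_eq_norm] using hρ : ‖ρ‖ ≤ ε)
    have hz : x₀ + ρ' ∈ Metric.closedBall x₀ ε := by
      simpa [dist_eq_norm] using (by simpa [dist_eq_norm] using hρ' : ‖ρ'‖ ≤ ε)
    have hsub : (x₀ + ρ) - (x₀ + ρ') = ρ - ρ' := by abel
    have hkey := key _ hy _ hz
    rw [hsub] at hkey
    have hrw : T ρ - T ρ' =
        Φ.symm (DF x₀ (ρ - ρ') - (F (x₀ + ρ) - F (x₀ + ρ'))) := by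
      have : Φ.symm (DF x₀ (ρ - ρ')) = ρ - ρ' := by
        rw [← hΦ]; exact Φ.symm_apply_apply _
      rw [hT, hT, map_sub, this, map_sub]
      abel
    rw [hrw]
    calc ‖Φ.symm (DF x₀ (ρ - ρ') - (F (x₀ + ρ) - F (x₀ + ρ')))‖
        ≤ ‖(Φ.symm : StrongDual ℝ X →L[ℝ] X)‖ *
            ‖DF x₀ (ρ - ρ') - (F (x₀ + ρ) - F (x₀ + ρ'))‖ :=
          (Φ.symm : StrongDual ℝ X →L[ℝ] X).le_opNorm _
      _ ≤ cinv * ((cL * ε) * ‖ρ - ρ'‖) := by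
          apply mul_le_mul hΦinv _ (norm_nonneg _) hcinv.le
          rw [← norm_neg]
          simpa [neg_sub] using hkey
      _ ≤ (1 / 2) * ‖ρ - ρ'‖ := by
          have h' : cinv * (cL * ε) ≤ 1 / 2 := by linarith [h5]
          calc cinv * ((cL * ε) * ‖ρ - ρ'‖) = (cinv * (cL * ε)) * ‖ρ - ρ'‖ := by ring
            _ ≤ (1 / 2) * ‖ρ - ρ'‖ := mul_le_mul_of_nonneg_right h' (norm_nonneg _)
  intro ρ hρ ρ' hρ'
  refine ⟨contr ρ hρ ρ' hρ', ?_⟩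
  have h0 : (0 : X) ∈ Metric.closedBall (0 : X) ε := Metric.mem_closedBall_self hε.le
  have hT0 : ‖T 0‖ ≤ cinv * δ := by
    rw [hT]
    simp only [add_zero, zero_sub, norm_neg]
    calc ‖Φ.symm (F x₀)‖ ≤ ‖(Φ.symm : StrongDual ℝ X →L[ℝ] X)‖ * ‖F x₀‖ :=
          (Φ.symm : StrongDual ℝ X →L[ℝ] X).le_opNorm _
      _ ≤ cinv * δ := mul_le_mul hΦinv h1 (norm_nonneg _) hcinv.le
  have hρn : ‖ρ‖ ≤ ε := by simpa [dist_eq_norm] using hρ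
  calc ‖T ρ‖ = ‖(T ρ - T 0) + T 0‖ := by rw [sub_add_cancel]
    _ ≤ ‖T ρ - T 0‖ + ‖T 0‖ := norm_add_le _ _
    _ ≤ (1 / 2) * ‖ρ - 0‖ + cinv * δ := add_le_add (contr ρ hρ 0 h0) hT0
    _ ≤ (1 / 2) * ε + (1 / 2) * ε := by
        have ha : (1 / 2 : ℝ) * ‖ρ - 0‖ ≤ (1 / 2) * ε := by
          rw [sub_zero]; linarith
        have hb : cinv * δ ≤ (1 / 2) * ε := by linarith
        linarith
    _ = ε := by ring
end

section
/- Let V and Q be real Hilbert spaces, let a : V × V → ℝ and b : V × Q → ℝ be bounded bilinear forms. Define the continuous linear map L : V × Q → (V × Q)' by L(v,q)(w,r) := a(v,w) + b(w,q) + b(v,r), and let K := { v ∈ V : b(v,q) = 0 for all q ∈ Q } be the kernel of the operator B : V → Q' given by B(v)(q) = b(v,q). Assume: (1) there exists α > 0 such that a(v,v) ≥ α ‖v‖² for all v ∈ K; (2) there exists β > 0 such that for every q ∈ Q, sup over v ∈ V with ‖v‖ ≤ 1 of b(v,q) is at least β ‖q‖. Then L is bijective, i.e., an isomorphism from V ×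 Q onto the topological dual of V × Q. -/
open RealInnerProductSpace InnerProductSpace ContinuousLinearMap

section BrezziAux

variable {V Q : Type*}
    [NormedAddCommGroup V] [InnerProductSpace ℝ V]
    [NormedAddCommGroup Q] [InnerProductSpace ℝ Q] [CompleteSpace Q]

/-- The operator associated to a bounded bilinear form. -/
noncomputable def brezziT (b : V →L[ℝ] Q →L[ℝ] ℝ) : V →L[ℝ] Q :=
  LinearMap.mkContinuous
    { toFun := fun v => (InnerProductSpace.toDual ℝ Q).symm (b v)
      map_add' := fun x y => by simp only [map_add]
      map_smul' := fun c x => by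
        simp only [map_smul, LinearIsometryEquiv.map_smulₛₗ, starRingEnd_apply,
          star_trivial, RingHom.id_apply] }
    ‖b‖ (fun v => by
      simp only [LinearMap.coe_mk, AddHom.coe_mk, LinearIsometryEquiv.norm_map]
      exact b.le_opNorm v)

lemma brezziT_inner (b : V →L[ℝ] Q →L[ℝ] ℝ) (v : V) (q : Q) :
    ⟪brezziT b v, q⟫_ℝ = b v q := by
  simp [brezziT, InnerProductSpace.toDual_symm_apply (x := q) (y := b v)]

end BrezziAux

set_option maxHeartbeats 1600000 in
/-- Brezzi's saddle-point theorem (sufficiency direction). -/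
theorem stmt_3 {V Q : Type*}
    [NormedAddCommGroup V] [InnerProductSpace ℝ V] [CompleteSpace V]
    [NormedAddCommGroup Q] [InnerProductSpace ℝ Q] [CompleteSpace Q]
    (a : V →L[ℝ] V →L[ℝ] ℝ) (b : V →L[ℝ] Q →L[ℝ] ℝ)
    (L : (V × Q) →L[ℝ] StrongDual ℝ (V × Q))
    (hL : ∀ (v : V) (q : Q) (w : V) (r : Q), L (v, q) (w, r) = a v w + b w q + b v r)
    (h1 : ∃ α > 0, ∀ v : V, (∀ q : Q, b v q = 0) → a v v ≥ α * ‖v‖ ^ 2)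
    (h2 : ∃ β > 0, ∀ q : Q, β * ‖q‖ ≤ ⨆ v : {v : V // ‖v‖ ≤ 1}, b v.1 q) :
    Function.Bijective L := by
  obtain ⟨α, hα, hcoerc⟩ := h1
  obtain ⟨β, hβ, hinf⟩ := h2
  set T : V →L[ℝ] Q := brezziT b with hTdef
  have hT : ∀ (v : V) (q : Q), ⟪T v, q⟫_ℝ = b v q := brezziT_inner b
  set T' : Q →L[ℝ] V := ContinuousLinearMap.adjoint T with hT'def
  have hT' : ∀ (w : V) (q : Q), ⟪w, T' q⟫_ℝ = b w q := by
    intro w q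
    rw [ContinuousLinearMap.adjoint_inner_right, hT]
  -- T' is bounded below
  have hTstar : ∀ q : Q, β * ‖q‖ ≤ ‖T' q‖ := by
    intro q
    refine (hinf q).trans (Real.iSup_le (fun v => ?_) (norm_nonneg _))
    calc b v.1 q = ⟪v.1, T' q⟫_ℝ := (hT' v.1 q).symm
      _ ≤ ‖v.1‖ * ‖T' q‖ := real_inner_le_norm _ _
      _ ≤ 1 * ‖T' q‖ := mul_le_mul_of_nonneg_right v.2 (norm_nonneg _)
      _ = ‖T' q‖ := one_mul _
  -- the bilinear form c q r = ⟪T' q, T' r⟫ is coercive; Lax-Milgram gives S with S q = T (T' q)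
  set c : Q →L[ℝ] Q →L[ℝ] ℝ :=
    ContinuousLinearMap.bilinearComp (innerSL ℝ) T' T' with hcdef
  have hc : ∀ q r : Q, c q r = ⟪T' q, T' r⟫_ℝ := fun q r => rfl
  have hcoerC : IsCoercive c := by
    refine ⟨β * β, mul_pos hβ hβ, fun q => ?_⟩
    rw [hc, real_inner_self_eq_norm_mul_norm]
    have key := mul_self_le_mul_self (mul_nonneg hβ.le (norm_nonneg q)) (hTstar q)
    nlinarith [key]
  set S : Q ≃L[ℝ] Q := hcoerC.continuousLinearEquivOfBilin with hSdef
  have hS : ∀ q : Q, T (T' q) = S q := by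
    intro q
    refine ext_inner_right ℝ fun r => ?_
    rw [hcoerC.continuousLinearEquivOfBilin_apply, hc,
      ← ContinuousLinearMap.adjoint_inner_right T (T' q) r]
  -- the kernel K
  set K : Submodule ℝ V := LinearMap.ker (T : V →ₗ[ℝ] Q) with hKdef
  have hKmem : ∀ v : V, v ∈ K ↔ ∀ q : Q, b v q = 0 := by
    intro v
    constructor
    · intro hv q
      rw [← hT]
      have : T v = 0 := hv
      rw [this, inner_zero_left]
    · intro hv
      have : ⟪T v, T v⟫_ℝ = 0 := by rw [hT]; exact hv _
      exact inner_self_eq_zero.mp this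
  have hKclosed : IsClosed (K : Set V) := ContinuousLinearMap.isClosed_ker T
  haveI : CompleteSpace K := hKclosed.completeSpace_coe
  -- the restricted form on K and Lax-Milgram there
  set aK : K →L[ℝ] K →L[ℝ] ℝ :=
    ContinuousLinearMap.bilinearComp a K.subtypeL K.subtypeL with haKdef
  have haK : ∀ u w : K, aK u w = a u.1 w.1 := fun u w => rfl
  have hcoerA : IsCoercive aK := by
    refine ⟨α, hα, fun u => ?_⟩
    have h := hcoerc u.1 ((hKmem u.1).mp u.2)
    rw [haK]
    calc α * ‖u‖ * ‖u‖ = α * ‖u.1‖ ^ 2 := by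
          rw [Submodule.coe_norm]; ring
      _ ≤ a u.1 u.1 := h
  set AK : K ≃L[ℝ] K := hcoerA.continuousLinearEquivOfBilin with hAKdef
  constructor
  · -- injectivity
    rw [injective_iff_map_eq_zero]
    rintro ⟨v, q⟩ hvq
    have hzero : ∀ (w : V) (r : Q), a v w + b w q + b v r = 0 := by
      intro w r
      rw [← hL v q w r, hvq]; rfl
    have hbv : ∀ r : Q, b v r = 0 := by
      intro r
      have := hzero 0 r
      simpa using this
    have hbq : ∀ w : V, a v w + b w q = 0 := by
      intro w
      have := hzero w 0
      simpa using this
    have hv0 : v = 0 := by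
      have havv : a v v = 0 := by
        have := hbq v
        rwa [hbv q, add_zero] at this
      have := hcoerc v hbv
      rw [havv] at this
      by_contra hne
      have hpos : 0 < ‖v‖ := norm_pos_iff.mpr hne
      nlinarith [mul_pos hα (mul_pos hpos hpos)]
    have hq0 : q = 0 := by
      have hbwq : ∀ w : V, b w q = 0 := by
        intro w
        have := hbq w
        rw [hv0] at this
        simpa using this
      have hT'q : T' q = 0 := by
        refine (inner_self_eq_zero (𝕜 := ℝ)).mp ?_
        rw [real_inner_comm, hT' (T' q) q, hbwq]
      have h := hTstar q
      rw [hT'q, norm_zero] at h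
      have : ‖q‖ ≤ 0 := by nlinarith
      exact norm_eq_zero.mp (le_antisymm this (norm_nonneg q))
    rw [hv0, hq0]
    rfl
  · -- surjectivity
    intro φ
    set f : V →L[ℝ] ℝ := φ.comp (ContinuousLinearMap.inl ℝ V Q) with hfdef
    set g : Q →L[ℝ] ℝ := φ.comp (ContinuousLinearMap.inr ℝ V Q) with hgdef
    have hφ : ∀ (w : V) (r : Q), φ (w, r) = f w + g r := by
      intro w r
      have h : ((w, r) : V × Q) = (w, 0) + (0, r) := by simp
      rw [h, map_add]
      rfl
    set gh : Q := (InnerProductSpace.toDual ℝ Q).symm g with hghdef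
    have hgh : ∀ r : Q, ⟪gh, r⟫_ℝ = g r := fun r =>
      InnerProductSpace.toDual_symm_apply
    set v0 : V := T' (S.symm gh) with hv0def
    have hTv0 : T v0 = gh := by rw [hv0def, hS]; exact S.apply_symm_apply gh
    -- solve on the kernel
    set Fv : V →L[ℝ] ℝ := f - a v0 with hFvdef
    set FK : K →L[ℝ] ℝ := Fv.comp K.subtypeL with hFKdef
    set Fh : K := (InnerProductSpace.toDual ℝ K).symm FK with hFhdef
    set u : K := AK.symm Fh with hudef
    have hu : ∀ w : K, a u.1 w.1 = f w.1 - a v0 w.1 := by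
      intro w
      have hh1 : ⟪AK (AK.symm Fh), w⟫_ℝ = aK (AK.symm Fh) w :=
        hcoerA.continuousLinearEquivOfBilin_apply _ w
      rw [AK.apply_symm_apply] at hh1
      have hh2 : ⟪Fh, w⟫_ℝ = FK w := InnerProductSpace.toDual_symm_apply
      rw [hh2] at hh1
      have hh3 : FK w = f w.1 - a v0 w.1 := rfl
      rw [← hudef] at hh1
      rw [← haK u w, ← hh1]
      exact hh3
    set v : V := v0 + u.1 with hvdef
    set Gv : V →L[ℝ] ℝ := f - a v with hGvdef
    have hGv0 : ∀ k : V, k ∈ K → Gv k = 0 := by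
      intro k hk
      have hav : a v k = a v0 k + a u.1 k := by
        rw [hvdef, map_add]
        rfl
      have := hu ⟨k, hk⟩
      simp only [hGvdef, ContinuousLinearMap.sub_apply, hav, this]
      ring
    set g' : V := (InnerProductSpace.toDual ℝ V).symm Gv with hg'def
    have hg' : ∀ w : V, ⟪g', w⟫_ℝ = Gv w := fun w =>
      InnerProductSpace.toDual_symm_apply
    set q : Q := S.symm (T g') with hqdef
    have hT'q : T' q = g' := by
      have hdK : g' - T' q ∈ K := by
        rw [hKdef, LinearMap.mem_ker]
        have hh : T (T' q) = T g' := by rw [hS, hqdef, S.apply_symm_apply]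
        rw [map_sub, ContinuousLinearMap.coe_coe, hh, sub_self]
      have horth : ∀ k : V, k ∈ K → ⟪g' - T' q, k⟫_ℝ = 0 := by
        intro k hk
        have hTk : T k = 0 := hk
        have h2 : ⟪T' q, k⟫_ℝ = 0 := by
          rw [real_inner_comm, ContinuousLinearMap.adjoint_inner_right, hTk,
            inner_zero_left]
        rw [inner_sub_left, hg' k, hGv0 k hk, h2, sub_zero]
      have hself : ⟪g' - T' q, g' - T' q⟫_ℝ = 0 := horth _ hdK
      have := inner_self_eq_zero.mp hself
      rw [sub_eq_zero] at this
      exact this.symm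
    refine ⟨(v, q), ?_⟩
    refine ContinuousLinearMap.ext ?_
    rintro ⟨w, r⟩
    have hbwq : b w q = f w - a v w := by
      rw [← hT' w q, hT'q, real_inner_comm, hg' w]
      rfl
    have hbvr : b v r = g r := by
      rw [← hT v r]
      have hTv : T v = gh := by
        have hTu : T u.1 = 0 := u.2
        rw [hvdef, map_add, hTu, add_zero, hTv0]
      rw [hTv, hgh]
    rw [hL v q w r, hφ w r, hbwq, hbvr]
    ring
end

section
/- For every m ∈ ℕ there exists a constant c > 0 such that for all real numbers a < b, every real polynomial p of degree at most m, and every x ∈ [a,b], one has (p(x))² ≤ (c / (b − a)) · ∫_a^b (p(t))² dt. -/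
open Set Polynomial

noncomputable section

/-- evaluation of the coefficient-vector polynomial -/
def Fv (n : ℕ) (v : Fin n → ℝ) (y : ℝ) : ℝ := ∑ i, v i * y ^ (i : ℕ)

lemma Fv_cont (n : ℕ) : Continuous (fun p : (Fin n → ℝ) × ℝ => Fv n p.1 p.2) := by
  unfold Fv
  exact continuous_finset_sum _ fun i _ =>
    ((continuous_apply i).comp continuous_fst).mul ((continuous_pow i).comp continuous_snd)

lemma Fv_smul (n : ℕ) (c : ℝ) (v : Fin n → ℝ) (y : ℝ) :
    Fv n (c • v) y = c * Fv n v y := by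
  simp [Fv, Finset.mul_sum, mul_assoc]

/-- the quadratic form giving the L² norm on [0,1] -/
def Qv (n : ℕ) (v : Fin n → ℝ) : ℝ :=
  ∑ i : Fin n, ∑ j : Fin n, v i * v j * (1 / ((i : ℕ) + (j : ℕ) + 1 : ℝ))

lemma integral_sq_eq (n : ℕ) (v : Fin n → ℝ) :
    ∫ s in (0:ℝ)..1, (Fv n v s) ^ 2 = Qv n v := by
  have h1 : ∀ s : ℝ, (Fv n v s) ^ 2
      = ∑ i : Fin n, ∑ j : Fin n, (v i * v j) * s ^ ((i : ℕ) + (j : ℕ)) := by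
    intro s
    rw [sq, Fv, Finset.sum_mul_sum]
    refine Finset.sum_congr rfl fun i _ => Finset.sum_congr rfl fun j _ => by
      rw [pow_add]; ring
  simp only [h1]
  rw [intervalIntegral.integral_finset_sum fun i _ => Continuous.intervalIntegrable (by continuity) 0 1]
  refine Finset.sum_congr rfl fun i _ => ?_
  rw [intervalIntegral.integral_finset_sum fun j _ => Continuous.intervalIntegrable (by continuity) 0 1]
  refine Finset.sum_congr rfl fun j _ => ?_
  rw [intervalIntegral.integral_const_mul, integral_pow]
  simp [Qv]

lemma Qv_cont (n : ℕ) : Continuous (Qv n) := by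
  unfold Qv
  exact continuous_finset_sum _ fun i _ => continuous_finset_sum _ fun j _ =>
    (((continuous_apply i).mul (continuous_apply j)).mul continuous_const)

lemma Qv_smul (n : ℕ) (c : ℝ) (v : Fin n → ℝ) : Qv n (c • v) = c ^ 2 * Qv n v := by
  simp only [Qv, Finset.mul_sum]
  refine Finset.sum_congr rfl fun i _ => Finset.sum_congr rfl fun j _ => by
    simp [Pi.smul_apply, smul_eq_mul]; ring

lemma Qv_nonneg (n : ℕ) (v : Fin n → ℝ) : 0 ≤ Qv n v := by
  rw [← integral_sq_eq]
  exact intervalIntegral.integral_nonneg (by norm_num) (fun s _ => sq_nonneg _)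

lemma Qv_pos (n : ℕ) (v : Fin n → ℝ) (hv : v ≠ 0) : 0 < Qv n v := by
  rw [← integral_sq_eq]
  have hle : (0:ℝ) ≤ 1 := by norm_num
  rw [intervalIntegral.integral_of_le hle]
  set P : Polynomial ℝ := ∑ i : Fin n, Polynomial.C (v i) * Polynomial.X ^ (i : ℕ) with hP
  have hPeval : ∀ s : ℝ, P.eval s = Fv n v s := by
    intro s; simp [hP, Fv, Polynomial.eval_finset_sum]
  have hPne : P ≠ 0 := by
    intro h
    apply hv
    funext i
    have := congrArg (fun q => Polynomial.coeff q (i : ℕ)) h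
    simp only [hP, Polynomial.finset_sum_coeff, Polynomial.coeff_C_mul,
      Polynomial.coeff_X_pow, Polynomial.coeff_zero] at this
    rw [Finset.sum_eq_single i] at this
    · simpa using this
    · intro j _ hj
      simp only [mul_ite, mul_one, mul_zero, ite_eq_right_iff]
      intro h'
      exact absurd (Fin.ext h'.symm) hj
    · simp
  have hroots : ({x | P.IsRoot x}).Finite := Polynomial.finite_setOf_isRoot hPne
  rw [MeasureTheory.integral_pos_iff_support_of_nonneg (fun s => sq_nonneg _)]
  · have hsub : Ioc (0:ℝ) 1 \ {x | P.IsRoot x} ⊆ Function.support (fun s => (Fv n v s)^2) := by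
      intro s hs
      simp only [Function.mem_support]
      intro h
      exact hs.2 (show P.eval s = 0 by rw [hPeval]; exact sq_eq_zero_iff.1 h)
    have h1 : MeasureTheory.volume (Ioc (0:ℝ) 1 \ {x | P.IsRoot x}) = 1 := by
      rw [MeasureTheory.measure_diff_null (hroots.measure_zero _)]
      simp
    rw [MeasureTheory.Measure.restrict_apply₀']
    · calc (0:ENNReal) < 1 := by norm_num
        _ = MeasureTheory.volume (Ioc (0:ℝ) 1 \ {x | P.IsRoot x}) := h1.symm
        _ ≤ MeasureTheory.volume (Function.support (fun s => (Fv n v s)^2) ∩ Ioc 0 1) := by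
            apply MeasureTheory.measure_mono
            intro s hs; exact ⟨hsub hs, hs.1⟩
    · exact measurableSet_Ioc.nullMeasurableSet
  · exact (Continuous.integrableOn_Ioc (by
      have := Fv_cont n
      exact ((this.comp (Continuous.prodMk_right v)).pow 2)))

lemma unit_estimate (m : ℕ) : ∃ c > 0, ∀ q : Polynomial ℝ, q.natDegree ≤ m →
    ∀ y ∈ Icc (0:ℝ) 1, (q.eval y) ^ 2 ≤ c * ∫ s in (0:ℝ)..1, (q.eval s) ^ 2 := by
  set n := m + 1 with hn
  have hSne : (Metric.sphere (0 : Fin n → ℝ) 1).Nonempty :=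
    NormedSpace.sphere_nonempty.mpr zero_le_one
  have hKco : IsCompact ((Metric.sphere (0 : Fin n → ℝ) 1) ×ˢ Icc (0:ℝ) 1) :=
    (isCompact_sphere _ _).prod isCompact_Icc
  have hKne : ((Metric.sphere (0 : Fin n → ℝ) 1) ×ˢ Icc (0:ℝ) 1).Nonempty :=
    hSne.prod ⟨0, by norm_num⟩
  obtain ⟨⟨v0, y0⟩, hv0K, hmax⟩ := hKco.exists_isMaxOn hKne
    (f := fun p : (Fin n → ℝ) × ℝ => (Fv n p.1 p.2) ^ 2)
    (((Fv_cont n).pow 2).continuousOn)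
  set M := (Fv n v0 y0) ^ 2 with hM
  have hM0 : 0 ≤ M := sq_nonneg _
  obtain ⟨v1, hv1S, hmin⟩ := (isCompact_sphere (0 : Fin n → ℝ) 1).exists_isMinOn hSne
    (f := Qv n) (Qv_cont n).continuousOn
  set m0 := Qv n v1 with hm0
  have hv1ne : v1 ≠ 0 := by
    intro h
    rw [h] at hv1S
    simp at hv1S
  have hm0pos : 0 < m0 := Qv_pos n v1 hv1ne
  refine ⟨M / m0 + 1, by positivity, ?_⟩
  intro q hq y hy
  set v : Fin n → ℝ := fun i => q.coeff (i : ℕ) with hv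
  have hFv : ∀ t : ℝ, Fv n v t = q.eval t := by
    intro t
    rw [Polynomial.eval_eq_sum_range' (Nat.lt_succ_of_le hq), Fv,
      ← Fin.sum_univ_eq_sum_range (fun i => q.coeff i * t ^ i) n]
  have hInt : (∫ s in (0:ℝ)..1, (q.eval s) ^ 2) = Qv n v := by
    rw [← integral_sq_eq]
    congr 1
    funext s
    rw [hFv]
  rw [hInt, ← hFv y]
  by_cases hvz : v = 0
  · simp [hvz, Fv, Qv]
  · set r := ‖v‖ with hr
    have hrpos : 0 < r := norm_pos_iff.2 hvz
    set u := r⁻¹ • v with hu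
    have huS : u ∈ Metric.sphere (0 : Fin n → ℝ) 1 := by
      rw [mem_sphere_zero_iff_norm, hu, norm_smul, norm_inv, Real.norm_eq_abs, abs_of_pos hrpos]
      exact inv_mul_cancel₀ hrpos.ne'
    have hvu : v = r • u := by
      rw [hu, smul_inv_smul₀ hrpos.ne']
    have h1 : (Fv n u y) ^ 2 ≤ M := hmax (Set.mk_mem_prod huS hy)
    have h2 : m0 ≤ Qv n u := hmin huS
    have h3 : Fv n v y = r * Fv n u y := by rw [hvu, Fv_smul]
    have h4 : Qv n v = r ^ 2 * Qv n u := by rw [hvu, Qv_smul]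
    have h5 : M / m0 * m0 = M := div_mul_cancel₀ _ hm0pos.ne'
    have h6 : 0 ≤ M / m0 := div_nonneg hM0 hm0pos.le
    have h7 : M ≤ (M / m0) * Qv n u := by
      calc M = (M / m0) * m0 := h5.symm
        _ ≤ (M / m0) * Qv n u := mul_le_mul_of_nonneg_left h2 h6
    have h8 : 0 ≤ Qv n u := le_trans hm0pos.le h2
    calc (Fv n v y) ^ 2 = r ^ 2 * (Fv n u y) ^ 2 := by rw [h3]; ring
      _ ≤ r ^ 2 * ((M / m0) * Qv n u) :=
          mul_le_mul_of_nonneg_left (le_trans h1 h7) (sq_nonneg r)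
      _ = (M / m0) * Qv n v := by rw [h4]; ring
      _ ≤ (M / m0 + 1) * Qv n v := by
          rw [h4]
          have : 0 ≤ r ^ 2 * Qv n u := mul_nonneg (sq_nonneg r) h8
          nlinarith

end

open Set

/-- Inverse estimate `‖p‖_{L∞(I)}² ≤ c |I|⁻¹ ‖p‖_{L²(I)}²` for polynomials of
bounded degree, with a constant independent of the interval. -/
theorem stmt_9 (m : ℕ) : ∃ c > 0, ∀ a b : ℝ, a < b →
    ∀ p : Polynomial ℝ, p.degree ≤ (m : ℕ) →
    ∀ x ∈ Icc a b, (p.eval x) ^ 2 ≤ (c / (b - a)) * ∫ t in a..b, (p.eval t) ^ 2 := by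
  obtain ⟨c, hc, hest⟩ := unit_estimate m
  refine ⟨c, hc, ?_⟩
  intro a b hab p hdeg x hx
  have hba : (0:ℝ) < b - a := sub_pos.2 hab
  set L : Polynomial ℝ := Polynomial.C (b - a) * Polynomial.X + Polynomial.C a with hL
  set q := p.comp L with hq
  have hLdeg : L.natDegree = 1 := Polynomial.natDegree_linear hba.ne'
  have hqdeg : q.natDegree ≤ m := by
    calc q.natDegree ≤ p.natDegree * L.natDegree := Polynomial.natDegree_comp_le
      _ = p.natDegree := by rw [hLdeg, mul_one]
      _ ≤ m := Polynomial.natDegree_le_iff_degree_le.mpr hdeg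
  have hqeval : ∀ s : ℝ, q.eval s = p.eval ((b - a) * s + a) := by
    intro s; simp [hq, hL, Polynomial.eval_comp]
  set y : ℝ := (x - a) / (b - a) with hy
  have hymem : y ∈ Icc (0:ℝ) 1 := by
    constructor
    · exact div_nonneg (sub_nonneg.2 hx.1) hba.le
    · rw [div_le_one hba]; linarith [hx.2]
  have hqy : q.eval y = p.eval x := by
    rw [hqeval, hy]
    congr 1
    field_simp
    ring
  have hCoV : (∫ s in (0:ℝ)..1, (q.eval s) ^ 2)
      = (b - a)⁻¹ * ∫ t in a..b, (p.eval t) ^ 2 := by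
    have := intervalIntegral.integral_comp_mul_add (a := (0:ℝ)) (b := 1)
      (fun t => (p.eval t) ^ 2) hba.ne' a
    simp only [mul_zero, zero_add, mul_one, smul_eq_mul] at this
    calc (∫ s in (0:ℝ)..1, (q.eval s) ^ 2)
        = ∫ s in (0:ℝ)..1, (p.eval ((b - a) * s + a)) ^ 2 := by
          congr 1; funext s; rw [hqeval]
      _ = (b - a)⁻¹ * ∫ t in a..(b - a + a), (p.eval t) ^ 2 := this
      _ = (b - a)⁻¹ * ∫ t in a..b, (p.eval t) ^ 2 := by norm_num
  have := hest q hqdeg y hymem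
  rw [hqy, hCoV] at this
  calc (p.eval x) ^ 2 ≤ c * ((b - a)⁻¹ * ∫ t in a..b, (p.eval t) ^ 2) := this
    _ = (c / (b - a)) * ∫ t in a..b, (p.eval t) ^ 2 := by ring
end

section
/- For every m ∈ ℕ there exists a constant c > 0 such that for all real numbers a < b and every real polynomial p of degree at most m, one has ∫_a^b (p'(t))² dt ≤ (c / (b − a)²) · ∫_a^b (p(t))² dt, where p' denotes the derivative of p. -/
open Set

namespace Stmt10
open Polynomial MeasureTheory intervalIntegral Finset

noncomputable def ev (m : ℕ) (c : Fin (m+1) → ℝ) (t : ℝ) : ℝ := ∑ i, c i * t ^ (i:ℕ)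
noncomputable def dv (m : ℕ) (c : Fin (m+1) → ℝ) (t : ℝ) : ℝ := ∑ i, c i * (((i:ℕ):ℝ) * t ^ ((i:ℕ)-1))
noncomputable def Pc (m : ℕ) (c : Fin (m+1) → ℝ) : Polynomial ℝ := ∑ i, C (c i) * X ^ (i:ℕ)

lemma ev_eq (m c t) : (Pc m c).eval t = ev m c t := by
  simp [Pc, ev, Polynomial.eval_finset_sum]

lemma dv_eq (m c t) : (Pc m c).derivative.eval t = dv m c t := by
  simp [Pc, dv, derivative_sum, Polynomial.eval_finset_sum, Polynomial.derivative_X_pow]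

lemma coeff_Pc (m c) (i : Fin (m+1)) : (Pc m c).coeff (i:ℕ) = c i := by
  simp [Pc, finset_sum_coeff, coeff_C_mul, coeff_X_pow, Fin.val_eq_val]

lemma cont_ev (m : ℕ) : Continuous (fun p : (Fin (m+1) → ℝ) × ℝ => ev m p.1 p.2) := by
  unfold ev; fun_prop
lemma cont_dv (m : ℕ) : Continuous (fun p : (Fin (m+1) → ℝ) × ℝ => dv m p.1 p.2) := by
  unfold dv; fun_prop

noncomputable def g (m : ℕ) (c : Fin (m+1) → ℝ) : ℝ := ∫ t in (0:ℝ)..1, (ev m c t)^2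
noncomputable def f (m : ℕ) (c : Fin (m+1) → ℝ) : ℝ := ∫ t in (0:ℝ)..1, (dv m c t)^2

lemma cont_g (m : ℕ) : Continuous (g m) :=
  intervalIntegral.continuous_parametric_intervalIntegral_of_continuous'
    (by have := cont_ev m; fun_prop) 0 1
lemma cont_f (m : ℕ) : Continuous (f m) :=
  intervalIntegral.continuous_parametric_intervalIntegral_of_continuous'
    (by have := cont_dv m; fun_prop) 0 1

lemma ev_smul (m : ℕ) (r : ℝ) (c : Fin (m+1) → ℝ) (t : ℝ) : ev m (r • c) t = r * ev m c t := by
  unfold ev; rw [Finset.mul_sum]; exact Finset.sum_congr rfl fun i _ => by simp [mul_assoc]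
lemma dv_smul (m : ℕ) (r : ℝ) (c : Fin (m+1) → ℝ) (t : ℝ) : dv m (r • c) t = r * dv m c t := by
  unfold dv; rw [Finset.mul_sum]; exact Finset.sum_congr rfl fun i _ => by simp [mul_assoc]

lemma g_smul (m : ℕ) (r : ℝ) (c : Fin (m+1) → ℝ) : g m (r • c) = r^2 * g m c := by
  unfold g; simp only [ev_smul, mul_pow]; exact intervalIntegral.integral_const_mul _ _
lemma f_smul (m : ℕ) (r : ℝ) (c : Fin (m+1) → ℝ) : f m (r • c) = r^2 * f m c := by
  unfold f; simp only [dv_smul, mul_pow]; exact intervalIntegral.integral_const_mul _ _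

lemma f_zero (m : ℕ) : f m 0 = 0 := by simp [f, dv]
lemma g_zero (m : ℕ) : g m 0 = 0 := by simp [g, ev]

lemma g_pos (m : ℕ) (c : Fin (m+1) → ℝ) (hc : c ≠ 0) : 0 < g m c := by
  have hP : Pc m c ≠ 0 := by
    intro h
    apply hc
    funext i
    have := coeff_Pc m c i
    rw [h, coeff_zero] at this
    exact this.symm
  have hfin : {t : ℝ | ev m c t = 0}.Finite := by
    have : {t : ℝ | ev m c t = 0} = {t : ℝ | (Pc m c).IsRoot t} := by
      ext t; simp [IsRoot, ev_eq]
    rw [this]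
    exact Polynomial.finite_setOf_isRoot hP
  have hq : Continuous (ev m c) := by
    have := cont_ev m
    fun_prop
  unfold g
  rw [intervalIntegral.integral_of_le zero_le_one]
  apply (MeasureTheory.setIntegral_pos_iff_support_of_nonneg_ae ?_ ?_).2
  · have h1 : Function.support (fun t => (ev m c t)^2) ∩ Ioc (0:ℝ) 1 ⊇
        Ioc 0 1 \ {t | ev m c t = 0} := by
      intro t ht
      refine ⟨?_, ht.1⟩
      simp only [Function.mem_support]
      intro h
      exact ht.2 (by simpa [pow_eq_zero_iff] using h)
    calc (0:ENNReal) < volume (Ioc (0:ℝ) 1 \ {t | ev m c t = 0}) := by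
          rw [measure_diff_null (hfin.measure_zero volume)]; simp
      _ ≤ _ := measure_mono h1
  · filter_upwards with t using sq_nonneg _
  · exact (hq.pow 2).integrableOn_Ioc

lemma ref (m : ℕ) : ∃ C > 0, ∀ c : Fin (m+1) → ℝ, f m c ≤ C * g m c := by
  have hS : IsCompact (Metric.sphere (0 : Fin (m+1) → ℝ) 1) := isCompact_sphere _ _
  have hne : (Metric.sphere (0 : Fin (m+1) → ℝ) 1).Nonempty :=
    NormedSpace.sphere_nonempty.2 zero_le_one
  have hgne : ∀ c ∈ Metric.sphere (0 : Fin (m+1) → ℝ) 1, g m c ≠ 0 := by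
    intro c hc
    have : c ≠ 0 := by
      intro h; rw [Metric.mem_sphere, h] at hc; simp at hc
    exact (g_pos m c this).ne'
  obtain ⟨c₀, hc₀, hmax⟩ := hS.exists_isMaxOn hne
    (((cont_f m).continuousOn).div ((cont_g m).continuousOn) hgne)
  refine ⟨max (f m c₀ / g m c₀) 1, lt_of_lt_of_le one_pos (le_max_right _ _), fun c => ?_⟩
  by_cases hc : c = 0
  · subst hc; simp [f_zero, g_zero]
  · set r : ℝ := ‖c‖ with hr
    have hr0 : 0 < r := norm_pos_iff.2 hc
    set c' : Fin (m+1) → ℝ := r⁻¹ • c with hc'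
    have hc'S : c' ∈ Metric.sphere (0 : Fin (m+1) → ℝ) 1 := by
      simp only [hc', Metric.mem_sphere, dist_zero_right, norm_smul, norm_inv,
        Real.norm_eq_abs]
      rw [abs_of_pos hr0]
      exact inv_mul_cancel₀ hr0.ne'
    have hgc' : 0 < g m c' := g_pos m c' (by
      intro h; rw [h] at hc'S; simp at hc'S)
    have key : f m c' ≤ max (f m c₀ / g m c₀) 1 * g m c' := by
      have h1 : f m c' / g m c' ≤ f m c₀ / g m c₀ := hmax hc'S
      calc f m c' = (f m c' / g m c') * g m c' := by field_simp
        _ ≤ max (f m c₀ / g m c₀) 1 * g m c' := by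
            apply mul_le_mul_of_nonneg_right (h1.trans (le_max_left _ _)) hgc'.le
    have hcc : c = r • c' := by
      rw [hc', smul_smul, mul_inv_cancel₀ hr0.ne', one_smul]
    have hfc : r^2 * f m c' = f m c := by rw [← f_smul, ← hcc]
    have hgc : r^2 * g m c' = g m c := by rw [← g_smul, ← hcc]
    calc f m c = r^2 * f m c' := hfc.symm
      _ ≤ r^2 * (max (f m c₀ / g m c₀) 1 * g m c') := by
          apply mul_le_mul_of_nonneg_left key (sq_nonneg r)
      _ = max (f m c₀ / g m c₀) 1 * g m c := by rw [← hgc]; ring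

lemma ref_poly (m : ℕ) : ∃ C > 0, ∀ p : Polynomial ℝ, p.degree ≤ (m:ℕ) →
    (∫ t in (0:ℝ)..1, (p.derivative.eval t)^2) ≤ C * ∫ t in (0:ℝ)..1, (p.eval t)^2 := by
  obtain ⟨C, hC, hCle⟩ := ref m
  refine ⟨C, hC, fun p hp => ?_⟩
  set c : Fin (m+1) → ℝ := fun i => p.coeff i with hcdef
  have hdeg : p.natDegree < m + 1 :=
    Nat.lt_succ_of_le (Polynomial.natDegree_le_iff_degree_le.2 hp)
  have hPc : Pc m c = p := by
    rw [Pc]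
    conv_rhs => rw [p.as_sum_range' (m+1) hdeg]
    rw [← Fin.sum_univ_eq_sum_range (fun i => (Polynomial.monomial i) (p.coeff i)) (m+1)]
    exact Finset.sum_congr rfl fun i _ => by rw [Polynomial.C_mul_X_pow_eq_monomial]
  have h1 : (∫ t in (0:ℝ)..1, (p.derivative.eval t)^2) = f m c := by
    unfold f; rw [← hPc]; simp only [dv_eq]
  have h2 : (∫ t in (0:ℝ)..1, (p.eval t)^2) = g m c := by
    unfold g; rw [← hPc]; simp only [ev_eq]
  rw [h1, h2]; exact hCle c

end Stmt10

/-- Inverse estimate `|p|_{H¹(I)} ≤ c |I|⁻¹ ‖p‖_{L²(I)}` for polynomials of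
bounded degree, with a constant independent of the interval. -/
theorem stmt_10 (m : ℕ) : ∃ c > 0, ∀ a b : ℝ, a < b →
    ∀ p : Polynomial ℝ, p.degree ≤ (m : ℕ) →
    (∫ t in a..b, (p.derivative.eval t) ^ 2) ≤
      (c / (b - a) ^ 2) * ∫ t in a..b, (p.eval t) ^ 2 := by
  obtain ⟨C, hC, hCle⟩ := Stmt10.ref_poly m
  refine ⟨C, hC, fun a b hab p hp => ?_⟩
  have hba : (0:ℝ) < b - a := sub_pos.2 hab
  set r : Polynomial ℝ := Polynomial.C a + Polynomial.C (b - a) * Polynomial.X with hrdef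
  set q : Polynomial ℝ := p.comp r with hqdef
  have hqdeg : q.degree ≤ (m:ℕ) := by
    refine le_trans (Polynomial.degree_le_natDegree) ?_
    have h1 : q.natDegree ≤ p.natDegree * r.natDegree := Polynomial.natDegree_comp_le
    have h2 : r.natDegree ≤ 1 := by
      rw [hrdef]
      refine le_trans (Polynomial.natDegree_add_le _ _) ?_
      simp [Polynomial.natDegree_C_mul_le]
      exact le_trans (Polynomial.natDegree_mul_le) (by simp)
    have h3 : p.natDegree ≤ m := Polynomial.natDegree_le_iff_degree_le.2 hp
    exact_mod_cast le_trans h1 (le_trans (Nat.mul_le_mul h3 h2) (by omega))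
  have hq_eval : ∀ s : ℝ, q.eval s = p.eval ((b-a) * s + a) := by
    intro s; rw [hqdef, Polynomial.eval_comp, hrdef]; simp; ring_nf <;> tauto
  have hq_der : ∀ s : ℝ, q.derivative.eval s = (b-a) * p.derivative.eval ((b-a) * s + a) := by
    intro s
    rw [hqdef, Polynomial.derivative_comp, hrdef]
    simp [Polynomial.eval_comp]
    ring_nf <;> tauto
  have hcov1 : (∫ s in (0:ℝ)..1, (p.derivative.eval ((b-a) * s + a))^2)
      = (b-a)⁻¹ * ∫ t in a..b, (p.derivative.eval t)^2 := by
    rw [intervalIntegral.integral_comp_mul_add (fun t => (p.derivative.eval t)^2) hba.ne' a]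
    norm_num
  have hcov2 : (∫ s in (0:ℝ)..1, (p.eval ((b-a) * s + a))^2)
      = (b-a)⁻¹ * ∫ t in a..b, (p.eval t)^2 := by
    rw [intervalIntegral.integral_comp_mul_add (fun t => (p.eval t)^2) hba.ne' a]
    norm_num
  have hq1 : (∫ s in (0:ℝ)..1, (q.derivative.eval s)^2)
      = (b-a)^2 * ((b-a)⁻¹ * ∫ t in a..b, (p.derivative.eval t)^2) := by
    rw [← hcov1, ← intervalIntegral.integral_const_mul]
    exact intervalIntegral.integral_congr fun s _ => by rw [hq_der s]; ring
  have hq2 : (∫ s in (0:ℝ)..1, (q.eval s)^2)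
      = (b-a)⁻¹ * ∫ t in a..b, (p.eval t)^2 := by
    rw [← hcov2]
    exact intervalIntegral.integral_congr fun s _ => by rw [hq_eval s]
  have hmain := hCle q hqdeg
  rw [hq1, hq2] at hmain
  have h4 : (b-a)^2 * ((b-a)⁻¹ * ∫ t in a..b, (p.derivative.eval t)^2)
      = (b-a) * ∫ t in a..b, (p.derivative.eval t)^2 := by
    field_simp
  rw [h4] at hmain
  have := mul_le_mul_of_nonneg_left hmain (inv_nonneg.2 hba.le)
  rw [← mul_assoc, inv_mul_cancel₀ hba.ne', one_mul] at this
  calc (∫ t in a..b, (p.derivative.eval t)^2) ≤ (b-a)⁻¹ * (C * ((b-a)⁻¹ * ∫ t in a..b, (p.eval t)^2)) := this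
    _ = (C / (b-a)^2) * ∫ t in a..b, (p.eval t)^2 := by
        rw [div_eq_mul_inv, sq, mul_inv]
        ring
end

section
/- Let a < b be real numbers. There exists a constant C > 0 (depending only on a and b) such that for every function u : ℝ → ℝ that is twice continuously differentiable on [a,b], one has ( ∫_a^b (u'(x))² dx )^{1/2} ≤ C · ( ∫_a^b ( (u(x))² + (u'(x))² + (u''(x))² ) dx )^{1/4} · ( ∫_a^b (u(x))² dx )^{1/4} + C · ( ∫_a^b (u(x))² dx )^{1/2}. -/
open Set MeasureTheory

lemma my_ftc (a b c d : ℝ) (hac : a ≤ c) (hcd : c ≤ d) (hdb : d ≤ b)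
    (f f' : ℝ → ℝ)
    (hder : ∀ x ∈ Icc a b, HasDerivWithinAt f (f' x) (Icc a b) x)
    (hcont' : ContinuousOn f' (Icc a b)) :
    ∫ x in c..d, f' x = f d - f c := by
  have hsub : Icc c d ⊆ Icc a b := Icc_subset_Icc hac hdb
  apply intervalIntegral.integral_eq_sub_of_hasDeriv_right_of_le hcd
  · exact fun x hx => ((hder x (hsub hx)).mono hsub).continuousWithinAt
  · intro x hx
    have hx' : x ∈ Ioo a b := ⟨lt_of_le_of_lt hac hx.1, lt_of_lt_of_le hx.2 hdb⟩
    exact ((hder x (Ioo_subset_Icc_self hx')).hasDerivAt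
      (Icc_mem_nhds hx'.1 hx'.2)).hasDerivWithinAt
  · exact (hcont'.mono (by rwa [uIcc_of_le hcd])).intervalIntegrable

lemma my_cs (a b : ℝ) (hab : a ≤ b) (f g : ℝ → ℝ)
    (hf : ContinuousOn f (Icc a b)) (hg : ContinuousOn g (Icc a b)) :
    ∫ x in a..b, |f x| * |g x| ≤
      Real.sqrt (∫ x in a..b, f x * f x) * Real.sqrt (∫ x in a..b, g x * g x) := by
  have hu : Icc a b = uIcc a b := (uIcc_of_le hab).symm
  have hif : IntervalIntegrable (fun x => f x * f x) volume a b :=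
    ((hf.mul hf).mono hu.ge).intervalIntegrable
  have hig : IntervalIntegrable (fun x => g x * g x) volume a b :=
    ((hg.mul hg).mono hu.ge).intervalIntegrable
  have hifg : IntervalIntegrable (fun x => |f x| * |g x|) volume a b :=
    (((hf.abs).mul (hg.abs)).mono hu.ge).intervalIntegrable
  set A := ∫ x in a..b, f x * f x with hA
  set C := ∫ x in a..b, g x * g x with hC
  set B := ∫ x in a..b, |f x| * |g x| with hB
  have hA0 : 0 ≤ A := intervalIntegral.integral_nonneg hab (fun x _ => mul_self_nonneg _)
  have hC0 : 0 ≤ C := intervalIntegral.integral_nonneg hab (fun x _ => mul_self_nonneg _)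
  have key : ∀ ε : ℝ, 0 < ε → B ≤ (ε * A + C / ε) / 2 := by
    intro ε hε
    have hpt : ∀ x ∈ Icc a b, |f x| * |g x| ≤ (ε * (f x * f x) + (g x * g x) / ε) / 2 := by
      intro x _
      have h0 : 0 ≤ (Real.sqrt ε * |f x| - |g x| / Real.sqrt ε) ^ 2 := sq_nonneg _
      have hε' : Real.sqrt ε * Real.sqrt ε = ε := Real.mul_self_sqrt hε.le
      have hε2 : 0 < Real.sqrt ε := Real.sqrt_pos.2 hε
      have hfx : |f x| * |f x| = f x * f x := abs_mul_abs_self _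
      have hgx : |g x| * |g x| = g x * g x := abs_mul_abs_self _
      rw [sub_sq] at h0
      have expand : 2 * (Real.sqrt ε * |f x|) * (|g x| / Real.sqrt ε) = 2 * (|f x| * |g x|) := by
        field_simp
      have e1 : (Real.sqrt ε * |f x|) ^ 2 = ε * (f x * f x) := by
        rw [mul_pow, Real.sq_sqrt hε.le, sq_abs, sq]
      have e2 : (|g x| / Real.sqrt ε) ^ 2 = (g x * g x) / ε := by
        rw [div_pow, Real.sq_sqrt hε.le, sq_abs, sq]
      rw [expand, e1, e2] at h0
      linarith
    calc B ≤ ∫ x in a..b, (ε * (f x * f x) + (g x * g x) / ε) / 2 := by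
          apply intervalIntegral.integral_mono_on hab hifg _ hpt
          exact (((hif.const_mul ε).add (hig.div_const ε)).div_const 2)
      _ = (ε * A + C / ε) / 2 := by
          rw [intervalIntegral.integral_div]
          rw [intervalIntegral.integral_add (hif.const_mul ε) (hig.div_const ε)]
          rw [intervalIntegral.integral_const_mul, intervalIntegral.integral_div]
  rcases eq_or_lt_of_le hA0 with hA0' | hApos
  · -- A = 0
    have hB0 : B ≤ 0 := by
      by_contra hB'
      push_neg at hB'
      rcases eq_or_lt_of_le hC0 with hC0' | hCpos
      · have := key 1 one_pos
        rw [← hA0', ← hC0'] at this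
        simp at this
        linarith
      · have := key (C / B) (div_pos hCpos hB')
        rw [← hA0'] at this
        have hCB : C / (C / B) = B := by field_simp
        rw [hCB] at this
        linarith
    calc B ≤ 0 := hB0
      _ ≤ _ := by positivity
  · rcases eq_or_lt_of_le hC0 with hC0' | hCpos
    · have hB0 : B ≤ 0 := by
        by_contra hB'
        push_neg at hB'
        have := key (B / A) (div_pos hB' hApos)
        rw [← hC0'] at this
        have h1 : (B / A) * A = B := by field_simp
        have h2 : (0 : ℝ) / (B / A) = 0 := by simp
        rw [h1, h2] at this
        linarith
      calc B ≤ 0 := hB0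
        _ ≤ _ := by positivity
    · have := key (Real.sqrt C / Real.sqrt A) (by positivity)
      have hAs : Real.sqrt A * Real.sqrt A = A := Real.mul_self_sqrt hA0
      have hCs : Real.sqrt C * Real.sqrt C = C := Real.mul_self_sqrt hC0
      have hApos' : 0 < Real.sqrt A := Real.sqrt_pos.2 hApos
      have hCpos' : 0 < Real.sqrt C := Real.sqrt_pos.2 hCpos
      have e1 : (Real.sqrt C / Real.sqrt A) * A = Real.sqrt C * Real.sqrt A := by
        field_simp
        nlinarith
      have e2 : C / (Real.sqrt C / Real.sqrt A) = Real.sqrt C * Real.sqrt A := by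
        field_simp
        nlinarith
      rw [e1, e2] at this
      linarith [this]

lemma my_trace (a b : ℝ) (hab : a < b) (f f' : ℝ → ℝ)
    (hder : ∀ x ∈ Icc a b, HasDerivWithinAt f (f' x) (Icc a b) x)
    (hcont' : ContinuousOn f' (Icc a b)) (y : ℝ) (hy : y ∈ Icc a b) :
    f y ≤ (b - a)⁻¹ * (∫ x in a..b, f x) + ∫ x in a..b, |f' x| := by
  have hab' := hab.le
  have hfc : ContinuousOn f (Icc a b) := fun x hx => (hder x hx).continuousWithinAt
  obtain ⟨x₀, hx₀, hmin⟩ := isCompact_Icc.exists_isMinOn (nonempty_Icc.2 hab') hfc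
  have habs : IntervalIntegrable (fun x => |f' x|) volume a b :=
    ContinuousOn.intervalIntegrable (by rw [uIcc_of_le hab']; exact hcont'.abs)
  have hmin' : (b - a) * f x₀ ≤ ∫ x in a..b, f x := by
    have h := intervalIntegral.integral_mono_on hab' (intervalIntegrable_const : IntervalIntegrable (fun _ => f x₀) volume a b)
      (ContinuousOn.intervalIntegrable (u := f) (by rw [uIcc_of_le hab']; exact hfc))
      (fun x hx => isMinOn_iff.1 hmin x hx)
    simpa [smul_eq_mul] using h
  have key : f y - f x₀ ≤ ∫ x in a..b, |f' x| := by
    rcases le_total x₀ y with h | h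
    · have hftc := my_ftc a b x₀ y hx₀.1 h hy.2 f f' hder hcont'
      calc f y - f x₀ = ∫ x in x₀..y, f' x := hftc.symm
        _ ≤ |∫ x in x₀..y, f' x| := le_abs_self _
        _ ≤ ∫ x in x₀..y, |f' x| := intervalIntegral.abs_integral_le_integral_abs h
        _ ≤ ∫ x in a..b, |f' x| := intervalIntegral.integral_mono_interval hx₀.1 h hy.2
            (ae_of_all _ fun x => abs_nonneg _) habs
    · have hftc := my_ftc a b y x₀ hy.1 h hx₀.2 f f' hder hcont'
      have : f y - f x₀ = -(∫ x in y..x₀, f' x) := by rw [hftc]; ring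
      calc f y - f x₀ = -(∫ x in y..x₀, f' x) := this
        _ ≤ |∫ x in y..x₀, f' x| := neg_le_abs _
        _ ≤ ∫ x in y..x₀, |f' x| := intervalIntegral.abs_integral_le_integral_abs h
        _ ≤ ∫ x in a..b, |f' x| := intervalIntegral.integral_mono_interval hy.1 h hx₀.2
            (ae_of_all _ fun x => abs_nonneg _) habs
  have hba : (0:ℝ) < b - a := by linarith
  have hx0le : f x₀ ≤ (b - a)⁻¹ * ∫ x in a..b, f x := by
    calc f x₀ = (b - a)⁻¹ * ((b - a) * f x₀) := by field_simp
      _ ≤ (b - a)⁻¹ * ∫ x in a..b, f x :=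
          mul_le_mul_of_nonneg_left hmin' (inv_nonneg.2 hba.le)
  linarith

set_option maxHeartbeats 1000000 in
lemma my_arith (c : ℝ) (hc : 0 < c) (l d m h Ba Bb : ℝ)
    (hl : 0 ≤ l) (hd : 0 ≤ d) (hm : 0 ≤ m)
    (hBa : 0 ≤ Ba) (hBb : 0 ≤ Bb)
    (hlh : l ≤ h) (hmh : m ≤ h)
    (h1 : d^2 ≤ Ba + Bb + l*m)
    (h2 : Ba^2 ≤ (c*l^2 + 2*(l*d)) * (c*d^2 + 2*(d*m)))
    (h3 : Bb^2 ≤ (c*l^2 + 2*(l*d)) * (c*d^2 + 2*(d*m))) :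
    d^2 ≤ (64*(c+1)^2)^2 * (l*h) := by
  set s : ℝ := 64*(c+1)^2 with hs
  have hs64 : 64 ≤ s := by nlinarith
  have hspos : (0:ℝ) < s := by linarith
  have hh : 0 ≤ h := le_trans hm hmh
  by_contra hcon
  push_neg at hcon
  have hcon' : s^2 * (l*h) < d^2 := hcon
  have hd2 : 0 < d^2 := lt_of_le_of_lt (by positivity) hcon'
  have hdpos : 0 < d := by
    rcases hd.lt_or_eq with h' | h'
    · exact h'
    · exfalso; rw [← h'] at hd2; simp at hd2
  have b1 : s * l ≤ d := by
    have hsl2 : (s*l)^2 < d^2 := by nlinarith [mul_le_mul_of_nonneg_left hlh hl]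
    exact (lt_of_pow_lt_pow_left₀ 2 hd hsl2).le
  have b2 : s^2 * (l*m) ≤ d^2 := by nlinarith [mul_le_mul_of_nonneg_left hmh hl]
  have hlm_small : l * m ≤ d^2 / 2 := by
    have h64 : (64:ℝ)*64*(l*m) ≤ s*s*(l*m) :=
      mul_le_mul_of_nonneg_right (by nlinarith) (mul_nonneg hl hm)
    nlinarith [mul_nonneg hl hm]
  have hmax : d^2/4 ≤ Ba ∨ d^2/4 ≤ Bb := by
    by_contra hmax'
    push_neg at hmax'
    obtain ⟨ha', hb'⟩ := hmax'
    linarith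
  have hXY : (d^2/4)^2 ≤ (c*l^2 + 2*(l*d)) * (c*d^2 + 2*(d*m)) := by
    rcases hmax with h' | h'
    · exact le_trans (pow_le_pow_left₀ (by positivity) h' 2) h2
    · exact le_trans (pow_le_pow_left₀ (by positivity) h' 2) h3
  have e0 : (d^2/4)^2 * s^3 ≤ ((c*l^2 + 2*(l*d)) * (c*d^2 + 2*(d*m))) * s^3 :=
    mul_le_mul_of_nonneg_right hXY (by positivity)
  have q1 : s^2 * l^2 ≤ d^2 := by
    have := mul_le_mul b1 b1 (mul_nonneg hspos.le hl) hd
    nlinarith [this]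
  have q2 : s * (l*d) ≤ d^2 := by
    have := mul_le_mul_of_nonneg_right b1 hd
    nlinarith [this]
  have e1 : c^2*l^2*d^2*s^3 ≤ c^2*d^4*s := by
    calc c^2*l^2*d^2*s^3 = c^2*d^2*s * (s^2*l^2) := by ring
      _ ≤ c^2*d^2*s * d^2 := mul_le_mul_of_nonneg_left q1 (by positivity)
      _ = c^2*d^4*s := by ring
  have e2 : 2*c*(l^2*(d*m))*s^3 ≤ 2*c*d^4 := by
    have hq : (s*(l*d)) * (s^2*(l*m)) ≤ d^2 * d^2 :=
      mul_le_mul q2 b2 (by positivity) (by positivity)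
    calc 2*c*(l^2*(d*m))*s^3 = 2*c * ((s*(l*d)) * (s^2*(l*m))) := by ring
      _ ≤ 2*c * (d^2 * d^2) := mul_le_mul_of_nonneg_left hq (by positivity)
      _ = 2*c*d^4 := by ring
  have e3 : 2*c*(l*d^3)*s^3 ≤ 2*c*d^4*s^2 := by
    calc 2*c*(l*d^3)*s^3 = 2*c*d^2*s^2 * (s*(l*d)) := by ring
      _ ≤ 2*c*d^2*s^2 * d^2 := mul_le_mul_of_nonneg_left q2 (by positivity)
      _ = 2*c*d^4*s^2 := by ring
  have e4 : 4*(l*(d^2*m))*s^3 ≤ 4*d^4*s := by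
    calc 4*(l*(d^2*m))*s^3 = 4*d^2*s * (s^2*(l*m)) := by ring
      _ ≤ 4*d^2*s * d^2 := mul_le_mul_of_nonneg_left b2 (by positivity)
      _ = 4*d^4*s := by ring
  have hpoly : 16*c^2*s + 32*c + 32*c*s^2 + 64*s < s^3 := by
    rw [hs]
    nlinarith [sq_nonneg c, sq_nonneg (c+1), hc, sq_nonneg (c*(c+1)), sq_nonneg ((c+1)^2), sq_nonneg ((c+1)^3)]
  have hpolyd : (16*c^2*s + 32*c + 32*c*s^2 + 64*s) * d^4 < s^3 * d^4 :=
    mul_lt_mul_of_pos_right hpoly (by positivity)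
  nlinarith [e0, e1, e2, e3, e4, hpolyd]


open Set

set_option maxHeartbeats 1000000 in
/-- Gagliardo–Nirenberg interpolation inequality on a bounded interval:
`‖u'‖_{L²} ≤ C ‖u‖_{H²}^{1/2} ‖u‖_{L²}^{1/2} + C ‖u‖_{L²}`. -/
theorem stmt_14 (a b : ℝ) (hab : a < b) :
    ∃ C > 0, ∀ u u' u'' : ℝ → ℝ,
      (∀ x ∈ Icc a b, HasDerivWithinAt u (u' x) (Icc a b) x) →
      (∀ x ∈ Icc a b, HasDerivWithinAt u' (u'' x) (Icc a b) x) →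
      ContinuousOn u'' (Icc a b) →
      (∫ x in a..b, (u' x) ^ 2) ^ ((1 : ℝ) / 2) ≤
        C * (∫ x in a..b, ((u x) ^ 2 + (u' x) ^ 2 + (u'' x) ^ 2)) ^ ((1 : ℝ) / 4) *
            (∫ x in a..b, (u x) ^ 2) ^ ((1 : ℝ) / 4) +
          C * (∫ x in a..b, (u x) ^ 2) ^ ((1 : ℝ) / 2) := by
  set c : ℝ := (b - a)⁻¹ with hcdef
  have hc : 0 < c := by
    rw [hcdef]; exact inv_pos.2 (by linarith)
  refine ⟨64*(c+1)^2 + 1, by positivity, ?_⟩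
  intro u u' u'' hu hu' hu''c
  simp only [pow_two]
  have hIcc : uIcc a b = Icc a b := uIcc_of_le hab.le
  have huc : ContinuousOn u (Icc a b) := fun x hx => (hu x hx).continuousWithinAt
  have hu'c : ContinuousOn u' (Icc a b) := fun x hx => (hu' x hx).continuousWithinAt
  set L := ∫ x in a..b, u x * u x with hL
  set D := ∫ x in a..b, u' x * u' x with hD
  set M := ∫ x in a..b, u'' x * u'' x with hM
  have iL : IntervalIntegrable (fun x => u x * u x) volume a b :=
    ContinuousOn.intervalIntegrable (by rw [hIcc]; exact huc.mul huc)
  have iD : IntervalIntegrable (fun x => u' x * u' x) volume a b :=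
    ContinuousOn.intervalIntegrable (by rw [hIcc]; exact hu'c.mul hu'c)
  have iM : IntervalIntegrable (fun x => u'' x * u'' x) volume a b :=
    ContinuousOn.intervalIntegrable (by rw [hIcc]; exact hu''c.mul hu''c)
  have iUU'' : IntervalIntegrable (fun x => u x * u'' x) volume a b :=
    ContinuousOn.intervalIntegrable (by rw [hIcc]; exact huc.mul hu''c)
  have hHH : (∫ x in a..b, (u x * u x + u' x * u' x + u'' x * u'' x)) = L + D + M := by
    rw [intervalIntegral.integral_add (iL.add iD) iM, intervalIntegral.integral_add iL iD]
  have L0 : 0 ≤ L := intervalIntegral.integral_nonneg hab.le (fun x _ => mul_self_nonneg _)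
  have D0 : 0 ≤ D := intervalIntegral.integral_nonneg hab.le (fun x _ => mul_self_nonneg _)
  have M0 : 0 ≤ M := intervalIntegral.integral_nonneg hab.le (fun x _ => mul_self_nonneg _)
  set HH := L + D + M with hHHdef
  have HH0 : 0 ≤ HH := by positivity
  set l := Real.sqrt L with hldef
  set d := Real.sqrt D with hddef
  set m := Real.sqrt M with hmdef
  set h := Real.sqrt HH with hhdef
  have hl2 : l^2 = L := Real.sq_sqrt L0
  have hd2 : d^2 = D := Real.sq_sqrt D0
  have hm2 : m^2 = M := Real.sq_sqrt M0
  have hl0 : 0 ≤ l := Real.sqrt_nonneg _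
  have hd0 : 0 ≤ d := Real.sqrt_nonneg _
  have hm0 : 0 ≤ m := Real.sqrt_nonneg _
  have hlh : l ≤ h := Real.sqrt_le_sqrt (by linarith)
  have hmh : m ≤ h := Real.sqrt_le_sqrt (by linarith)
  -- integration by parts
  have hIBP : (∫ x in a..b, (u' x * u' x + u x * u'' x)) = u b * u' b - u a * u' a := by
    apply my_ftc a b a b le_rfl hab.le le_rfl (fun x => u x * u' x)
      (fun x => u' x * u' x + u x * u'' x)
      (fun x hx => (hu x hx).mul (hu' x hx))
      ((hu'c.mul hu'c).add (huc.mul hu''c))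
  have hsplit : D + (∫ x in a..b, u x * u'' x) = u b * u' b - u a * u' a := by
    rw [← hIBP, intervalIntegral.integral_add iD iUU'']
  -- Cauchy-Schwarz for ∫ u u''
  have hI2 : |∫ x in a..b, u x * u'' x| ≤ l * m := by
    calc |∫ x in a..b, u x * u'' x| ≤ ∫ x in a..b, |u x * u'' x| :=
          intervalIntegral.abs_integral_le_integral_abs hab.le
      _ = ∫ x in a..b, |u x| * |u'' x| := by
          congr 1; ext x; rw [abs_mul]
      _ ≤ l * m := my_cs a b hab.le u u'' huc hu''c
  -- boundary trace bounds for u*u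
  have hS1 : (∫ x in a..b, |u' x * u x + u x * u' x|) ≤ 2*(l*d) := by
    calc (∫ x in a..b, |u' x * u x + u x * u' x|)
        = ∫ x in a..b, 2 * (|u x| * |u' x|) := by
          congr 1; ext x
          rw [show u' x * u x + u x * u' x = 2 * (u x * u' x) by ring, abs_mul, abs_mul]
          norm_num
      _ = 2 * ∫ x in a..b, |u x| * |u' x| := intervalIntegral.integral_const_mul 2 _
      _ ≤ 2 * (l * d) := by
          have := my_cs a b hab.le u u' huc hu'c
          linarith
  have hS2 : (∫ x in a..b, |u'' x * u' x + u' x * u'' x|) ≤ 2*(d*m) := by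
    calc (∫ x in a..b, |u'' x * u' x + u' x * u'' x|)
        = ∫ x in a..b, 2 * (|u' x| * |u'' x|) := by
          congr 1; ext x
          rw [show u'' x * u' x + u' x * u'' x = 2 * (u' x * u'' x) by ring, abs_mul, abs_mul]
          norm_num
      _ = 2 * ∫ x in a..b, |u' x| * |u'' x| := intervalIntegral.integral_const_mul 2 _
      _ ≤ 2 * (d * m) := by
          have := my_cs a b hab.le u' u'' hu'c hu''c
          linarith
  have htraceU : ∀ y ∈ Icc a b, u y * u y ≤ c*l^2 + 2*(l*d) := by
    intro y hy
    have := my_trace a b hab (fun x => u x * u x) (fun x => u' x * u x + u x * u' x)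
      (fun x hx => (hu x hx).mul (hu x hx))
      ((hu'c.mul huc).add (huc.mul hu'c)) y hy
    rw [hl2]
    calc u y * u y ≤ (b-a)⁻¹ * L + ∫ x in a..b, |u' x * u x + u x * u' x| := this
      _ ≤ c*L + 2*(l*d) := by rw [hcdef]; linarith
  have htraceU' : ∀ y ∈ Icc a b, u' y * u' y ≤ c*d^2 + 2*(d*m) := by
    intro y hy
    have := my_trace a b hab (fun x => u' x * u' x) (fun x => u'' x * u' x + u' x * u'' x)
      (fun x hx => (hu' x hx).mul (hu' x hx))
      ((hu''c.mul hu'c).add (hu'c.mul hu''c)) y hy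
    rw [hd2]
    calc u' y * u' y ≤ (b-a)⁻¹ * D + ∫ x in a..b, |u'' x * u' x + u' x * u'' x| := this
      _ ≤ c*D + 2*(d*m) := by rw [hcdef]; linarith
  set Ba := |u a * u' a| with hBadef
  set Bb := |u b * u' b| with hBbdef
  have hXnn : 0 ≤ c*l^2 + 2*(l*d) := by positivity
  have hsqB : ∀ y ∈ Icc a b, (u y * u' y)^2 ≤ (c*l^2 + 2*(l*d)) * (c*d^2 + 2*(d*m)) := by
    intro y hy
    calc (u y * u' y)^2 = (u y * u y) * (u' y * u' y) := by ring
      _ ≤ (c*l^2 + 2*(l*d)) * (c*d^2 + 2*(d*m)) :=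
          mul_le_mul (htraceU y hy) (htraceU' y hy) (mul_self_nonneg _) hXnn
  have hBa2 : Ba^2 ≤ (c*l^2 + 2*(l*d)) * (c*d^2 + 2*(d*m)) := by
    rw [hBadef, sq_abs]; exact hsqB a ⟨le_rfl, hab.le⟩
  have hBb2 : Bb^2 ≤ (c*l^2 + 2*(l*d)) * (c*d^2 + 2*(d*m)) := by
    rw [hBbdef, sq_abs]; exact hsqB b ⟨hab.le, le_rfl⟩
  have h1 : d^2 ≤ Ba + Bb + l*m := by
    rw [hd2]
    have e1 := le_abs_self (u b * u' b)
    have e2 := neg_abs_le (u a * u' a)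
    have e3 := (abs_le.1 hI2).1
    linarith
  have harith := my_arith c hc l d m h Ba Bb hl0 hd0 hm0 (abs_nonneg _) (abs_nonneg _)
    hlh hmh h1 hBa2 hBb2
  have key : D ≤ (64*(c+1)^2)^2 * (l*h) := by rw [← hd2]; exact harith
  -- rewrite the goal
  rw [hHH]
  have r1 : D ^ ((1:ℝ)/2) = d := by rw [← Real.sqrt_eq_rpow]
  have r2 : L ^ ((1:ℝ)/2) = l := by rw [← Real.sqrt_eq_rpow]
  have r3 : HH ^ ((1:ℝ)/4) = Real.sqrt h := by
    rw [show ((1:ℝ)/4) = (1/2)*(1/2) by norm_num, Real.rpow_mul HH0,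
      ← Real.sqrt_eq_rpow, ← Real.sqrt_eq_rpow]
  have r4 : L ^ ((1:ℝ)/4) = Real.sqrt l := by
    rw [show ((1:ℝ)/4) = (1/2)*(1/2) by norm_num, Real.rpow_mul L0,
      ← Real.sqrt_eq_rpow, ← Real.sqrt_eq_rpow]
  rw [r1, r2, r3, r4]
  have hdle : d ≤ (64*(c+1)^2) * (Real.sqrt h * Real.sqrt l) := by
    calc d = Real.sqrt D := hddef
      _ ≤ Real.sqrt ((64*(c+1)^2)^2 * (l*h)) := Real.sqrt_le_sqrt key
      _ = (64*(c+1)^2) * (Real.sqrt l * Real.sqrt h) := by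
          rw [Real.sqrt_mul (by positivity), Real.sqrt_mul hl0,
            Real.sqrt_sq (by positivity)]
      _ = (64*(c+1)^2) * (Real.sqrt h * Real.sqrt l) := by ring
  have hsl : 0 ≤ Real.sqrt h * Real.sqrt l := by positivity
  have hCl : 0 ≤ (64*(c+1)^2 + 1) * l := by positivity
  calc d ≤ (64*(c+1)^2) * (Real.sqrt h * Real.sqrt l) := hdle
    _ ≤ (64*(c+1)^2 + 1) * (Real.sqrt h * Real.sqrt l) :=
        mul_le_mul_of_nonneg_right (by linarith) hsl
    _ = (64*(c+1)^2 + 1) * Real.sqrt h * Real.sqrt l := by ring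
    _ ≤ (64*(c+1)^2 + 1) * Real.sqrt h * Real.sqrt l + (64*(c+1)^2 + 1) * l := by linarith
    _ = (64*((c+1)*(c+1)) + 1) * Real.sqrt h * Real.sqrt l + (64*((c+1)*(c+1)) + 1) * l := by
        ring
end
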